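/- For integers t ≥ 3 and k ≥ t + 2, bgr_k(P_5 : K_{t,t}) = kt − k + 1. -/

import Mathlib

open Function Finset SimpleGraph

/-- A rainbow path on 4 vertices `u₁ v₁ u₂ v₂` (middle pattern). -/
def rbP4pat {N : ℕ} {γ : Type*} (c : Fin N → Fin N → γ) : Prop :=
  ∃ u₁ u₂ v₁ v₂ : Fin N, u₁ ≠ u₂ ∧ v₁ ≠ v₂ ∧
    c u₁ v₁ ≠ c u₂ v₁ ∧ c u₁ v₁ ≠ c u₂ v₂ ∧ c u₂ v₁ ≠ c u₂ v₂

/-- The coloring `c` of `K_{N,N}` contains a rainbow path on 4 vertices. -/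
def hasRainbowP4 {N : ℕ} {γ : Type*} (c : Fin N → Fin N → γ) : Prop :=
  rbP4pat c ∨ rbP4pat (fun v u => c u v)

/-- A rainbow path on 5 vertices `u₁ v₁ u₂ v₂ u₃` (one-sided pattern). -/
def rbP5pat {N : ℕ} {γ : Type*} (c : Fin N → Fin N → γ) : Prop :=
  ∃ u₁ u₂ u₃ v₁ v₂ : Fin N, u₁ ≠ u₂ ∧ u₁ ≠ u₃ ∧ u₂ ≠ u₃ ∧ v₁ ≠ v₂ ∧
    c u₁ v₁ ≠ c u₂ v₁ ∧ c u₁ v₁ ≠ c u₂ v₂ ∧ c u₁ v₁ ≠ c u₃ v₂ ∧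
    c u₂ v₁ ≠ c u₂ v₂ ∧ c u₂ v₁ ≠ c u₃ v₂ ∧ c u₂ v₂ ≠ c u₃ v₂

/-- The coloring `c` of `K_{N,N}` contains a rainbow path on 5 vertices. -/
def hasRainbowP5 {N : ℕ} {γ : Type*} (c : Fin N → Fin N → γ) : Prop :=
  rbP5pat c ∨ rbP5pat (fun v u => c u v)

/-- The coloring `c` of `K_{N,N}` contains a rainbow star `K_{1,3}`:
some vertex (on either side) has three incident edges with pairwise distinct colors. -/
def hasRainbowK13 {N : ℕ} {γ : Type*} (c : Fin N → Fin N → γ) : Prop :=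
  (∃ u v₁ v₂ v₃ : Fin N, c u v₁ ≠ c u v₂ ∧ c u v₁ ≠ c u v₃ ∧ c u v₂ ≠ c u v₃) ∨
  (∃ v u₁ u₂ u₃ : Fin N, c u₁ v ≠ c u₂ v ∧ c u₁ v ≠ c u₃ v ∧ c u₂ v ≠ c u₃ v)

/-- The coloring `c` of `K_{N,N}` (first coordinate: side `U`, second: side `V`)
contains a monochromatic copy of the (bipartite) graph `H`. -/
def hasMonoCopy {N : ℕ} {γ : Type*} {α : Type*} (c : Fin N → Fin N → γ)
    (H : SimpleGraph α) : Prop :=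
  ∃ i : γ, ∃ f : α → Fin N ⊕ Fin N, Function.Injective f ∧
    ∀ a b, H.Adj a b → ∃ u v : Fin N, c u v = i ∧
      ((f a = Sum.inl u ∧ f b = Sum.inr v) ∨ (f a = Sum.inr v ∧ f b = Sum.inl u))

/-- The coloring `c` of `K_{N,N}` contains a monochromatic copy of `K_{s,t}`
(in either orientation with respect to the two sides). -/
def hasMonoKst {N : ℕ} {γ : Type*} (c : Fin N → Fin N → γ) (s t : ℕ) : Prop :=
  ∃ i : γ, ∃ S T : Finset (Fin N),
    ((S.card = s ∧ T.card = t) ∨ (S.card = t ∧ T.card = s)) ∧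
    ∀ u ∈ S, ∀ v ∈ T, c u v = i

/-- Disjoint union of a family of graphs, on the sigma type. -/
def sigmaUnion {ι : Type*} {β : ι → Type*} (G : ∀ i, SimpleGraph (β i)) :
    SimpleGraph (Σ i, β i) where
  Adj x y := ∃ i a b, (G i).Adj a b ∧ x = ⟨i, a⟩ ∧ y = ⟨i, b⟩
  symm := ⟨by rintro x y ⟨i, a, b, h, rfl, rfl⟩; exact ⟨i, b, a, h.symm, rfl, rfl⟩⟩
  loopless := ⟨by
    rintro x ⟨i, a, b, h, rfl, h2⟩
    obtain rfl : a = b := by simpa using h2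
    exact (G i).irrefl h⟩


/-- `n` witnesses the bipartite Gallai–Ramsey property for a rainbow `P₅` versus a
monochromatic `K_{t,t}` with `k` colors. -/
def bgrP5Ktt (k t n : ℕ) : Prop :=
  k ≤ n ^ 2 ∧ ∀ N : ℕ, n ≤ N → ∀ c : Fin N → Fin N → Fin k,
    (∀ i : Fin k, ∃ u v, c u v = i) →
    hasRainbowP5 c ∨ hasMonoKst c t t

/-!
Let `c` color `K_{N,N}`, `N ≥ 5`, without rainbow `P₅`. Two different non-constant rows then show
at most three colors together: if they differ in column `D`, with colors `a ≠ b`, and show colors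
`x ≠ y` outside `{a, b}` in different columns, one in each row, the path through these columns and
`D` is rainbow, and the remaining placements of `x, y` are ruled out inside the two rows.

If at least five colors occur, this yields (up to transposing) a dominant color `m`: each column
shows at most one color besides `m`, and rows showing two colors besides `m` coincide. If some
row shows three colors, every other row is a copy of it or constant, and the constant rows share
one color; if every row and column shows at most two colors, the color pairs of the rows
intersect pairwise, hence form a star with center `m`. For `N > k(t-1)` and `k ≥ t + 2`, counting
columns by their color besides `m` then gives a monochromatic `K_{t,t}`.

The bound is sharp: coloring `k` blocks of `t - 1` columns of `K_{k(t-1),k(t-1)}` with distinct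
colors gives monochromatic columns, hence no rainbow `P₅`, and no color on `t` columns.
-/

namespace RainbowP5

section Finset

variable {α : Type*} [DecidableEq α]

lemma exists_two_notMem_of_card_add_two_le {s t : Finset α} (h : #t + 2 ≤ #s) :
    ∃ x ∈ s, ∃ y ∈ s, x ≠ y ∧ x ∉ t ∧ y ∉ t := by
  have : 1 < #(s \ t) := by have := le_card_sdiff t s; omega
  obtain ⟨x, hx, y, hy, hxy⟩ := one_lt_card.1 this
  rw [mem_sdiff] at hx hy
  exact ⟨x, hx.1, y, hy.1, hxy, hx.2, hy.2⟩

lemma eq_pair_of_card_eq_two {s : Finset α} {x y : α} (hs : #s = 2) (hx : x ∈ s) (hy : y ∈ s)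
    (hxy : x ≠ y) : s = {x, y} :=
  (eq_of_subset_of_card_le (insert_subset hx (singleton_subset_iff.2 hy))
    (by rw [card_pair hxy, hs])).symm

lemma exists_eq_pair_of_inter_nonempty {s t : Finset α} {x : α} (hs : #s = 2) (hx : x ∈ s)
    (hxt : x ∉ t) (hst : (s ∩ t).Nonempty) : ∃ κ ∈ t, s = {x, κ} := by
  obtain ⟨κ, hκ⟩ := hst
  rw [mem_inter] at hκ
  exact ⟨κ, hκ.2, eq_pair_of_card_eq_two hs hx hκ.1 (by rintro rfl; exact hxt hκ.2)⟩

theorem exists_mem_of_intersecting_pairs {ι : Type*} (s : Finset ι) (F : ι → Finset α)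
    (hF : ∀ i ∈ s, #(F i) = 2) (hint : ∀ i ∈ s, ∀ j ∈ s, (F i ∩ F j).Nonempty)
    (hU : 4 ≤ #(s.biUnion F)) : ∃ m, ∀ i ∈ s, m ∈ F i := by
  obtain ⟨i₁, hi₁⟩ : s.Nonempty := by
    by_contra! h
    rw [h, biUnion_empty, card_empty] at hU
    omega
  obtain ⟨x, hx, y, hy, hxy, hx₁, hy₁⟩ :=
    exists_two_notMem_of_card_add_two_le (s := s.biUnion F) (t := F i₁) (by rw [hF i₁ hi₁]; omega)
  obtain ⟨ix, hix, hx⟩ := mem_biUnion.1 hx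
  obtain ⟨iy, hiy, hy⟩ := mem_biUnion.1 hy
  obtain ⟨m, hm, hFx⟩ := exists_eq_pair_of_inter_nonempty (hF ix hix) hx hx₁ (hint ix hix i₁ hi₁)
  obtain ⟨m', hm', hFy⟩ := exists_eq_pair_of_inter_nonempty (hF iy hiy) hy hy₁ (hint iy hiy i₁ hi₁)
  have hmm' : m = m' := by
    obtain ⟨z, hz⟩ := hint ix hix iy hiy
    simp only [hFx, hFy, mem_inter, mem_insert, mem_singleton] at hz
    grind
  subst hmm'
  refine ⟨m, fun i hi => ?_⟩
  by_contra hmi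
  have hxi : x ∈ F i := by
    obtain ⟨z, hz⟩ := hint i hi ix hix
    simp only [hFx, mem_inter, mem_insert, mem_singleton] at hz
    grind
  have hyi : y ∈ F i := by
    obtain ⟨z, hz⟩ := hint i hi iy hiy
    simp only [hFy, mem_inter, mem_insert, mem_singleton] at hz
    grind
  obtain ⟨z, hz⟩ := hint i hi i₁ hi₁
  rw [eq_pair_of_card_eq_two (hF i hi) hxi hyi hxy, mem_inter, mem_insert, mem_singleton] at hz
  grind

end Finset

variable {N : ℕ} {γ : Type*}

lemma exists_three_ne {a b : Fin N} (hN : 5 ≤ N) :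
    ∃ x y z : Fin N, x ≠ y ∧ x ≠ z ∧ y ≠ z ∧ x ≠ a ∧ x ≠ b ∧ y ≠ a ∧ y ≠ b ∧ z ≠ a ∧ z ≠ b := by
  have : 2 < #({a, b}ᶜ : Finset (Fin N)) := by
    have := card_le_two (a := a) (b := b)
    rw [card_compl, Fintype.card_fin]
    omega
  obtain ⟨x, hx, y, hy, z, hz, hxy, hxz, hyz⟩ := two_lt_card.1 this
  simp only [mem_compl, mem_insert, mem_singleton, not_or] at hx hy hz
  exact ⟨x, y, z, hxy, hxz, hyz, hx.1, hx.2, hy.1, hy.2, hz.1, hz.2⟩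

section Colors

variable [DecidableEq γ]

def rowColors (c : Fin N → Fin N → γ) (u : Fin N) : Finset γ := univ.image (c u)

def colors (c : Fin N → Fin N → γ) : Finset γ := univ.image (uncurry c)

variable {c : Fin N → Fin N → γ}

@[simp] lemma mem_rowColors {u : Fin N} {x : γ} : x ∈ rowColors c u ↔ ∃ w, c u w = x := by
  simp [rowColors]

@[simp] lemma mem_colors {x : γ} : x ∈ colors c ↔ ∃ u v, c u v = x := by
  simp [colors]

lemma colors_swap : colors (swap c) = colors c := by
  ext x
  simp only [mem_colors, swap]
  exact exists_comm

lemma biUnion_rowColors : univ.biUnion (rowColors c) = colors c := by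
  ext x
  simp

lemma eq_of_card_rowColors_le_one {u : Fin N} (h : #(rowColors c u) ≤ 1) (w w' : Fin N) :
    c u w = c u w' :=
  card_le_one.1 h _ (mem_rowColors.2 ⟨w, rfl⟩) _ (mem_rowColors.2 ⟨w', rfl⟩)

lemma one_lt_card_rowColors {u w w' : Fin N} (h : c u w ≠ c u w') : 1 < #(rowColors c u) :=
  one_lt_card.2 ⟨_, mem_rowColors.2 ⟨w, rfl⟩, _, mem_rowColors.2 ⟨w', rfl⟩, h⟩

lemma exists_ne_of_one_lt_card_rowColors {u : Fin N} (h : 1 < #(rowColors c u)) :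
    ∃ w w', c u w ≠ c u w' := by
  obtain ⟨_, hx, _, hy, hxy⟩ := one_lt_card.1 h
  obtain ⟨w, rfl⟩ := mem_rowColors.1 hx
  obtain ⟨w', rfl⟩ := mem_rowColors.1 hy
  exact ⟨w, w', hxy⟩

lemma false_of_card_rowColors_le_two {u w₁ w₂ w₃ : Fin N} (h : #(rowColors c u) ≤ 2)
    (h₁₂ : c u w₁ ≠ c u w₂) (h₁₃ : c u w₁ ≠ c u w₃) (h₂₃ : c u w₂ ≠ c u w₃) : False := by
  have : 2 < #(rowColors c u) := two_lt_card.2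
    ⟨_, mem_rowColors.2 ⟨w₁, rfl⟩, _, mem_rowColors.2 ⟨w₂, rfl⟩, _, mem_rowColors.2 ⟨w₃, rfl⟩,
      h₁₂, h₁₃, h₂₃⟩
  omega

lemma eq_or_eq_of_card_rowColors_le_two {u : Fin N} (h : #(rowColors c u) ≤ 2) {w₁ w₂ : Fin N}
    (hne : c u w₁ ≠ c u w₂) (w : Fin N) : c u w = c u w₁ ∨ c u w = c u w₂ := by
  by_contra! hw
  exact false_of_card_rowColors_le_two h hne hw.1.symm hw.2.symm

end Colors

variable {c : Fin N → Fin N → γ}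

section TwoRows

/- A rainbow path `w₁ u w₂ u' w₃` through the rows `u, u'` is refuted as
`hC ⟨w₁, w₂, w₃, u, u', _⟩`. -/
variable (hC : ¬ rbP5pat (swap c)) (hN : 5 ≤ N)
include hC hN

lemma false_of_four_colors_on_two_columns {u u' D E : Fin N} {a b x y : γ}
    (ha : c u D = a) (hb : c u' D = b) (hx : c u E = x) (hy : c u' E = y)
    (hab : a ≠ b) (hax : a ≠ x) (hay : a ≠ y) (hbx : b ≠ x) (hby : b ≠ y) (hxy : x ≠ y) :
    False := by
  have huu' : u ≠ u' := by rintro rfl; exact hab (ha.symm.trans hb)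
  have hDE : D ≠ E := by rintro rfl; exact hax (ha.symm.trans hx)
  have other : ∀ O, O ≠ D → O ≠ E →
      (c u O = y ∧ c u' O = x) ∨ (c u O = b ∧ c u' O = a) := by
    intro O hOD hOE
    have g₁ : c u O = a ∨ c u O = b ∨ c u O = y := by
      by_contra!
      exact hC ⟨O, D, E, u, u', by grind⟩
    have g₂ : c u O = x ∨ c u O = y ∨ c u O = b := by
      by_contra!
      exact hC ⟨O, E, D, u, u', by grind⟩
    have h₁ : c u' O = x ∨ c u' O = a ∨ c u' O = b := by
      by_contra!
      exact hC ⟨E, D, O, u, u', by grind⟩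
    have h₂ : c u' O = a ∨ c u' O = x ∨ c u' O = y := by
      by_contra!
      exact hC ⟨D, E, O, u, u', by grind⟩
    have : ¬ (c u O = y ∧ c u' O = a) := fun h => hC ⟨E, O, D, u, u', by grind⟩
    have : ¬ (c u O = b ∧ c u' O = x) := fun h => hC ⟨E, O, D, u', u, by grind⟩
    grind
  -- two further columns of the same kind close a rainbow path through `D` or `E`
  have hsame : ∀ O O', O ≠ O' → O ≠ D → O ≠ E → O' ≠ D → O' ≠ E → c u O ≠ c u O' := by
    intro O O' hOO' hOD hOE hO'D hO'E hOO
    rcases other O hOD hOE with hO | hO <;> rcases other O' hO'D hO'E with hO' | hO'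
    · exact hC ⟨O, D, O', u, u', by grind⟩
    · grind
    · grind
    · exact hC ⟨O, E, O', u, u', by grind⟩
  obtain ⟨O₁, O₂, O₃, h₁₂, h₁₃, h₂₃, h₁D, h₁E, h₂D, h₂E, h₃D, h₃E⟩ := exists_three_ne hN
  have := hsame O₁ O₂ h₁₂ h₁D h₁E h₂D h₂E
  have := hsame O₁ O₃ h₁₃ h₁D h₁E h₃D h₃E
  have := hsame O₂ O₃ h₂₃ h₂D h₂E h₃D h₃E
  grind

lemma false_of_two_colors_notMem_row {u u' W₁ W₂ A B : Fin N}
    (hAB : c u' A ≠ c u' B) (hW : c u W₁ ≠ c u W₂)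
    (h₁ : ∀ w, c u' w ≠ c u W₁) (h₂ : ∀ w, c u' w ≠ c u W₂) : False := by
  have hW₁₂ : W₁ ≠ W₂ := by rintro rfl; exact hW rfl
  have huu' : u ≠ u' := by rintro rfl; exact h₁ W₁ rfl
  by_cases hW' : c u' W₁ = c u' W₂
  · obtain ⟨Z, hZ⟩ : ∃ Z, c u' Z ≠ c u' W₁ := by
      by_cases hA : c u' A = c u' W₁
      · exact ⟨B, fun hB => hAB (hA.trans hB.symm)⟩
      · exact ⟨A, hA⟩
    exact hC ⟨Z, W₁, W₂, u', u, by grind⟩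
  · obtain ⟨X, -, -, -, -, -, hX₁, hX₂, -⟩ := exists_three_ne (a := W₁) (b := W₂) hN
    by_cases hX : c u' X = c u' W₁
    · exact hC ⟨X, W₂, W₁, u', u, by grind⟩
    · exact hC ⟨X, W₁, W₂, u', u, by grind⟩

variable [DecidableEq γ]

theorem card_rowColors_union_le_three {u u' : Fin N} (hne : c u ≠ c u')
    (hu : 1 < #(rowColors c u)) (hu' : 1 < #(rowColors c u')) :
    #(rowColors c u ∪ rowColors c u') ≤ 3 := by
  by_contra! h4
  obtain ⟨D, hD⟩ := Function.ne_iff.1 hne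
  obtain ⟨x, hx, y, hy, hxy, hxD, hyD⟩ :=
    exists_two_notMem_of_card_add_two_le (s := rowColors c u ∪ rowColors c u')
      (t := {c u D, c u' D}) (by have := card_le_two (a := c u D) (b := c u' D); omega)
  simp only [mem_insert, mem_singleton, not_or] at hxD hyD
  by_cases mixed : ∃ x ∈ rowColors c u, ∃ y ∈ rowColors c u', x ≠ y ∧
      x ≠ c u D ∧ x ≠ c u' D ∧ y ≠ c u D ∧ y ≠ c u' D
  · obtain ⟨x, hx, y, hy, hxy, hxD⟩ := mixed
    obtain ⟨E, rfl⟩ := mem_rowColors.1 hx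
    obtain ⟨E', rfl⟩ := mem_rowColors.1 hy
    by_cases hEE' : E = E'
    · subst hEE'
      exact false_of_four_colors_on_two_columns hC hN rfl rfl rfl rfl hD (by grind) (by grind)
        (by grind) (by grind) hxy
    · exact hC ⟨E, D, E', u, u', by grind⟩
  rw [mem_union] at hx hy
  have hfar : ∀ {v v'}, (∀ w, c v' w ≠ x) → (∀ w, c v' w ≠ y) → x ∈ rowColors c v →
      y ∈ rowColors c v → 1 < #(rowColors c v') → False := by
    intro v v' hx' hy' hxv hyv hv'
    obtain ⟨W₁, rfl⟩ := mem_rowColors.1 hxv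
    obtain ⟨W₂, rfl⟩ := mem_rowColors.1 hyv
    obtain ⟨A, B, hAB⟩ := exists_ne_of_one_lt_card_rowColors hv'
    exact false_of_two_colors_notMem_row hC hN hAB hxy hx' hy'
  by_cases hxu : x ∈ rowColors c u
  · have hy' : y ∉ rowColors c u' := fun hy' => mixed ⟨x, hxu, y, hy', by grind⟩
    have hx' : x ∉ rowColors c u' := fun hx' =>
      mixed ⟨y, hy.resolve_right hy', x, hx', by grind⟩
    exact hfar (by simpa using hx') (by simpa using hy') hxu (hy.resolve_right hy') hu'
  · have hy' : y ∉ rowColors c u := fun hy' =>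
      mixed ⟨y, hy', x, hx.resolve_left hxu, by grind⟩
    exact hfar (by simpa using hxu) (by simpa using hy') (hx.resolve_left hxu)
      (hy.resolve_left hy') hu

lemma rowColors_inter_nonempty {u u' : Fin N} (hu : 1 < #(rowColors c u))
    (hu' : 1 < #(rowColors c u')) : (rowColors c u ∩ rowColors c u').Nonempty := by
  by_contra h
  rw [not_nonempty_iff_eq_empty] at h
  have hne : c u ≠ c u' := fun heq => by
    have hrc : rowColors c u = rowColors c u' := by simp only [rowColors, heq]
    rw [hrc, inter_self] at h
    rw [hrc, h, card_empty] at hu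
    omega
  have := card_rowColors_union_le_three hC hN hne hu hu'
  rw [card_union_of_disjoint (disjoint_iff_inter_eq_empty.2 h)] at this
  omega

lemma const_of_notMem_rowColors {u₀ x y : Fin N} (hu₀ : 2 < #(rowColors c u₀))
    (hy : c x y ∉ rowColors c u₀) (w : Fin N) : c x w = c x y := by
  by_contra hw
  have hne : c u₀ ≠ c x := fun h => hy (mem_rowColors.2 ⟨y, by rw [h]⟩)
  have h3 := card_rowColors_union_le_three hC hN hne (by omega) (one_lt_card_rowColors hw)
  have : #(insert (c x y) (rowColors c u₀)) ≤ #(rowColors c u₀ ∪ rowColors c x) :=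
    card_le_card (insert_subset (mem_union_right _ (mem_rowColors.2 ⟨y, rfl⟩)) subset_union_left)
  rw [card_insert_of_notMem hy] at this
  omega

end TwoRows

def IsRichRow (c : Fin N → Fin N → γ) (m : γ) (u : Fin N) : Prop :=
  ∃ w w', c u w ≠ m ∧ c u w' ≠ m ∧ c u w ≠ c u w'

def IsDominantColor (c : Fin N → Fin N → γ) (m : γ) : Prop :=
  (∀ w u u', c u w ≠ m → c u' w ≠ m → c u w = c u' w) ∧
    ∀ u u', IsRichRow c m u → IsRichRow c m u' → c u = c u'

lemma isDominantColor_of_forall_const_or_eq {m : γ} {g : Fin N → γ}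
    (h : ∀ u, (∀ w, c u w = m) ∨ c u = g) : IsDominantColor c m := by
  have hg : ∀ u w, c u w ≠ m → c u = g := fun u w hw => (h u).resolve_left fun hm => hw (hm w)
  refine ⟨fun w u u' hu hu' => by rw [hg u w hu, hg u' w hu'], ?_⟩
  rintro u u' ⟨w, -, hw, -⟩ ⟨w', -, hw', -⟩
  rw [hg u w hw, hg u' w' hw']

section RowWithThreeColors

variable (hR : ¬ rbP5pat c)
include hR

lemma false_of_const_rows {u₀ e e' x y : Fin N} {α β : γ} (he : ∀ w, c e w = α)
    (he' : ∀ w, c e' w = β) (hαβ : α ≠ β) (hxy : c u₀ x ≠ c u₀ y) (hxα : c u₀ x ≠ α)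
    (hxβ : c u₀ x ≠ β) (hyα : c u₀ y ≠ α) (hyβ : c u₀ y ≠ β) : False := by
  have := he x; have := he y; have := he' x; have := he' y
  exact hR ⟨e, u₀, e', x, y, by grind⟩

variable [DecidableEq γ]

lemma mem_rowColors_of_const_rows {u₀ e e' : Fin N} {κ α : γ} (hu₀ : 2 < #(rowColors c u₀))
    (he : ∀ w, c e w = κ) (he' : ∀ w, c e' w = α) (hκα : κ ≠ α) : κ ∈ rowColors c u₀ := by
  by_contra hκ
  obtain ⟨_, hx, _, hy, hxy, hxα, hyα⟩ := exists_two_notMem_of_card_add_two_le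
    (s := rowColors c u₀) (t := {α}) (by rw [card_singleton]; omega)
  obtain ⟨x, rfl⟩ := mem_rowColors.1 hx
  obtain ⟨y, rfl⟩ := mem_rowColors.1 hy
  exact false_of_const_rows hR he he' hκα hxy (fun h => hκ (mem_rowColors.2 ⟨x, h⟩))
    (by simpa using hxα) (fun h => hκ (mem_rowColors.2 ⟨y, h⟩)) (by simpa using hyα)

variable (hC : ¬ rbP5pat (swap c)) (hN : 5 ≤ N) (hcol : 5 ≤ #(colors c)) {u₀ : Fin N}
  (hu₀ : 2 < #(rowColors c u₀))
include hC hN hcol hu₀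

lemma eq_of_one_lt_card_rowColors {u : Fin N} (hu : 1 < #(rowColors c u)) : c u = c u₀ := by
  by_contra hne
  have h3 := card_rowColors_union_le_three hC hN (Ne.symm hne) (by omega) hu
  obtain ⟨_, hτ₁, _, hτ₂, hτ, hτ₁g, hτ₂g⟩ := exists_two_notMem_of_card_add_two_le
    (s := colors c) (t := rowColors c u₀ ∪ rowColors c u) (by omega)
  obtain ⟨x₁, y₁, rfl⟩ := mem_colors.1 hτ₁
  obtain ⟨x₂, y₂, rfl⟩ := mem_colors.1 hτ₂
  rw [mem_union, not_or] at hτ₁g hτ₂g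
  exact hτ₁g.1 (mem_rowColors_of_const_rows hR hu₀ (const_of_notMem_rowColors hC hN hu₀ hτ₁g.1)
    (const_of_notMem_rowColors hC hN hu₀ hτ₂g.1) hτ)

lemma const_rows_eq {e e' : Fin N} {α β : γ} (he : ∀ w, c e w = α) (he' : ∀ w, c e' w = β) :
    α = β := by
  by_contra hαβ
  have hcolors : ∀ κ ∈ colors c, κ ∈ rowColors c u₀ := by
    intro κ hκ
    obtain ⟨x, y, rfl⟩ := mem_colors.1 hκ
    by_cases hx : 1 < #(rowColors c x)
    · rw [eq_of_one_lt_card_rowColors hR hC hN hcol hu₀ hx]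
      exact mem_rowColors.2 ⟨y, rfl⟩
    have hconst : ∀ w, c x w = c x y := fun w => eq_of_card_rowColors_le_one (by omega) w y
    by_cases hxα : c x y = α
    · exact mem_rowColors_of_const_rows hR hu₀ hconst he' (hxα ▸ hαβ)
    · exact mem_rowColors_of_const_rows hR hu₀ hconst he hxα
  obtain ⟨_, hx, _, hy, hxy, hxαβ, hyαβ⟩ := exists_two_notMem_of_card_add_two_le
    (s := colors c) (t := {α, β}) (by have := card_le_two (a := α) (b := β); omega)
  obtain ⟨x, rfl⟩ := mem_rowColors.1 (hcolors _ hx)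
  obtain ⟨y, rfl⟩ := mem_rowColors.1 (hcolors _ hy)
  simp only [mem_insert, mem_singleton, not_or] at hxαβ hyαβ
  exact false_of_const_rows hR he he' hαβ hxy hxαβ.1 hxαβ.2 hyαβ.1 hyαβ.2

theorem exists_isDominantColor_of_two_lt_card : ∃ m, IsDominantColor c m := by
  have hrows : ∀ u, 1 < #(rowColors c u) → c u = c u₀ :=
    fun u hu => eq_of_one_lt_card_rowColors hR hC hN hcol hu₀ hu
  have hconst : ∀ u, #(rowColors c u) ≤ 1 → ∀ w w', c u w = c u w' :=
    fun u hu => eq_of_card_rowColors_le_one hu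
  have w₀ : Fin N := ⟨0, by omega⟩
  by_cases he : ∃ e, #(rowColors c e) ≤ 1
  · obtain ⟨e, he⟩ := he
    refine ⟨c e w₀, isDominantColor_of_forall_const_or_eq (g := c u₀) fun u => ?_⟩
    by_cases hu : 1 < #(rowColors c u)
    · exact Or.inr (hrows u hu)
    · exact Or.inl fun w => const_rows_eq hR hC hN hcol hu₀
        (fun w' => hconst u (by omega) w' w) (fun w' => hconst e he w' w₀)
  · push Not at he
    exact ⟨c u₀ w₀, isDominantColor_of_forall_const_or_eq fun u => Or.inr (hrows u (he u))⟩

end RowWithThreeColors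

section TwoColorRows

variable [DecidableEq γ] (hcol : 5 ≤ #(colors c)) (hrow : ∀ u, #(rowColors c u) ≤ 2)
  (hcolumn : ∀ v, #(rowColors (swap c) v) ≤ 2)
include hcol hrow hcolumn

lemma exists_forall_mem_rowColors (hC : ¬ rbP5pat (swap c)) (hN : 5 ≤ N) :
    ∃ m, ∀ u, m ∈ rowColors c u := by
  by_cases he : ∃ e, #(rowColors c e) ≤ 1
  · obtain ⟨e, he⟩ := he
    have w₀ : Fin N := ⟨0, by omega⟩
    refine ⟨c e w₀, fun u => ?_⟩
    by_contra hm
    -- a color outside row `u` and the constant row `e` gives a column with three colors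
    obtain ⟨_, hz, hzu⟩ := exists_mem_notMem_of_card_lt_card
      (s := insert (c e w₀) (rowColors c u)) (t := colors c)
      (by have := card_insert_le (c e w₀) (rowColors c u); have := hrow u; omega)
    obtain ⟨r, s, rfl⟩ := mem_colors.1 hz
    rw [mem_insert, not_or] at hzu
    have hes : c e s = c e w₀ := eq_of_card_rowColors_le_one he s w₀
    exact false_of_card_rowColors_le_two (c := swap c) (hcolumn s) (w₁ := e) (w₂ := r) (w₃ := u)
      (by simp only [swap, hes]; exact Ne.symm hzu.1)
      (fun h => hm (mem_rowColors.2 ⟨s, by simp only [swap] at h; rw [← h, hes]⟩))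
      (fun h => hzu.2 (mem_rowColors.2 ⟨s, h.symm⟩))
  · push Not at he
    obtain ⟨m, hm⟩ := exists_mem_of_intersecting_pairs univ (rowColors c)
      (fun u _ => le_antisymm (hrow u) (he u))
      (fun u _ u' _ => rowColors_inter_nonempty hC hN (he u) (he u'))
      (by rw [biUnion_rowColors]; omega)
    exact ⟨m, fun u => hm u (mem_univ u)⟩

lemma column_eq_of_forall_mem_rowColors (hR : ¬ rbP5pat c) {m : γ}
    (hm : ∀ u, m ∈ rowColors c u) {w u u' : Fin N} (hu : c u w ≠ m) (hu' : c u' w ≠ m) :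
    c u w = c u' w := by
  have hrow₂ : ∀ u w, c u w ≠ m → ∀ w', c u w' = c u w ∨ c u w' = m := by
    intro u w hw w'
    obtain ⟨wm, hwm⟩ := mem_rowColors.1 (hm u)
    rw [← hwm] at hw ⊢
    exact eq_or_eq_of_card_rowColors_le_two (hrow u) hw w'
  by_contra hne
  obtain ⟨_, hz, hzt⟩ := exists_mem_notMem_of_card_lt_card (s := {c u w, c u' w, m})
    (t := colors c) (by have := card_le_three (a := c u w) (b := c u' w) (c := m); omega)
  obtain ⟨r, s, rfl⟩ := mem_colors.1 hz
  simp only [mem_insert, mem_singleton, not_or] at hzt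
  have := hrow₂ u' w hu' s
  have hus : c u s = m := by
    by_contra hus
    have := hrow₂ u w hu s
    exact false_of_card_rowColors_le_two (c := swap c) (hcolumn s) (w₁ := u) (w₂ := r) (w₃ := u')
      (by simp only [swap]; grind) (by simp only [swap]; grind) (by simp only [swap]; grind)
  exact hR ⟨u', u, r, w, s, by grind⟩

theorem exists_isDominantColor_of_card_le_two (hR : ¬ rbP5pat c) (hC : ¬ rbP5pat (swap c))
    (hN : 5 ≤ N) : ∃ m, IsDominantColor c m := by
  obtain ⟨m, hm⟩ := exists_forall_mem_rowColors hcol hrow hcolumn hC hN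
  refine ⟨m, fun w u u' => column_eq_of_forall_mem_rowColors hcol hrow hcolumn hR hm, ?_⟩
  rintro u - ⟨w, w', hw, hw', hww'⟩ -
  obtain ⟨wm, hwm⟩ := mem_rowColors.1 (hm u)
  exact (false_of_card_rowColors_le_two (hrow u) hww' (hwm ▸ hw) (hwm ▸ hw')).elim

end TwoColorRows

theorem exists_isDominantColor [DecidableEq γ] (hR : ¬ rbP5pat c) (hC : ¬ rbP5pat (swap c))
    (hN : 5 ≤ N) (hcol : 5 ≤ #(colors c)) :
    (∃ m, IsDominantColor c m) ∨ ∃ m, IsDominantColor (swap c) m := by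
  by_cases hrow : ∃ u, 2 < #(rowColors c u)
  · obtain ⟨u₀, hu₀⟩ := hrow
    exact Or.inl (exists_isDominantColor_of_two_lt_card hR hC hN hcol hu₀)
  by_cases hcolumn : ∃ v, 2 < #(rowColors (swap c) v)
  · obtain ⟨v₀, hv₀⟩ := hcolumn
    exact Or.inr (exists_isDominantColor_of_two_lt_card hC hR hN (by rwa [colors_swap]) hv₀)
  push Not at hrow hcolumn
  exact Or.inl (exists_isDominantColor_of_card_le_two hcol hrow hcolumn hR hC hN)

section Counting

lemma hasMonoKst_of_le_card {s t : ℕ} {i : γ} {S T : Finset (Fin N)} (hS : s ≤ #S)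
    (hT : t ≤ #T) (h : ∀ u ∈ S, ∀ v ∈ T, c u v = i) : hasMonoKst c s t := by
  obtain ⟨S', hS', rfl⟩ := exists_subset_card_eq hS
  obtain ⟨T', hT', rfl⟩ := exists_subset_card_eq hT
  exact ⟨i, S', T', Or.inl ⟨rfl, rfl⟩, fun u hu v hv => h u (hS' hu) v (hT' hv)⟩

lemma hasMonoKst_of_swap {s t : ℕ} (h : hasMonoKst (swap c) s t) : hasMonoKst c s t := by
  obtain ⟨i, S, T, hST, h⟩ := h
  exact ⟨i, T, S, by tauto, fun v hv u hu => h u hu v hv⟩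

variable [DecidableEq γ] {t : ℕ}

def columnsWith (c : Fin N → Fin N → γ) (s : γ) : Finset (Fin N) :=
  univ.filter fun v => ∃ u, c u v = s

lemma hasMonoKst_of_not_isRichRow {m s : γ} (hdom : IsDominantColor c m) (hsm : s ≠ m)
    (hs : t ≤ #(columnsWith c s)) (hcompl : t ≤ #(univ \ columnsWith c s)) {P : Finset (Fin N)}
    (hP : ∀ u ∈ P, ¬ IsRichRow c m u) (hcard : 2 * t - 1 ≤ #P) : hasMonoKst c t t := by
  have hpoor : ∀ u ∈ P, ∀ w w', c u w ≠ m → c u w' ≠ m → c u w = c u w' := by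
    intro u hu w w' hw hw'
    by_contra h
    exact hP u hu ⟨w, w', hw, hw', h⟩
  have hsplit := card_filter_add_card_filter_not (s := P) (p := fun u => ∃ w, c u w = s)
  by_cases hA : t ≤ #(P.filter fun u => ∃ w, c u w = s)
  · refine hasMonoKst_of_le_card (i := m) hA hcompl fun u hu v hv => ?_
    obtain ⟨huP, w, hw⟩ := mem_filter.1 hu
    by_contra hm
    exact (mem_sdiff.1 hv).2 (mem_filter.2
      ⟨mem_univ _, u, (hpoor u huP v w hm (hw ▸ hsm)).trans hw⟩)
  · refine hasMonoKst_of_le_card (i := m) (S := P.filter fun u => ¬ ∃ w, c u w = s)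
      (by omega) hs fun u hu v hv => ?_
    by_contra hm
    obtain ⟨u', hu'⟩ := (mem_filter.1 hv).2
    exact (mem_filter.1 hu).2 ⟨v, (hdom.1 v u u' hm (hu' ▸ hsm)).trans hu'⟩

variable [Fintype γ]

lemma hasMonoKst_of_forall_eq_row (hN : Fintype.card γ * (t - 1) < N) {S : Finset (Fin N)}
    {u₀ : Fin N} (hS : t ≤ #S) (h : ∀ u ∈ S, c u = c u₀) : hasMonoKst c t t := by
  obtain ⟨i, -, hi⟩ := exists_lt_card_fiber_of_mul_lt_card_of_maps_to (s := univ) (t := univ)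
    (f := c u₀) (fun _ _ => mem_univ _) (by simpa using hN)
  exact hasMonoKst_of_le_card hS (Nat.le_of_pred_lt hi)
    fun u hu v hv => by rw [h u hu]; exact (mem_filter.1 hv).2

lemma exists_le_card_columnsWith (hN : Fintype.card γ * (t - 1) < N) (m : γ)
    (hclean : #(univ.filter fun v => ∀ u, c u v = m) < t) :
    ∃ s ≠ m, t ≤ #(columnsWith c s) := by
  by_contra! h
  have hcover : (univ : Finset (Fin N)) ⊆
      (univ.filter fun v => ∀ u, c u v = m) ∪ (univ.erase m).biUnion (columnsWith c) := by
    intro v _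
    by_cases hv : ∀ u, c u v = m
    · exact mem_union_left _ (mem_filter.2 ⟨mem_univ _, hv⟩)
    · push Not at hv
      obtain ⟨u, hu⟩ := hv
      exact mem_union_right _ (mem_biUnion.2
        ⟨c u v, mem_erase.2 ⟨hu, mem_univ _⟩, mem_filter.2 ⟨mem_univ _, u, rfl⟩⟩)
  have hbiUnion : #((univ.erase m).biUnion (columnsWith c)) ≤ (Fintype.card γ - 1) * (t - 1) :=
    calc #((univ.erase m).biUnion (columnsWith c))
        ≤ ∑ s ∈ univ.erase m, #(columnsWith c s) := card_biUnion_le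
      _ ≤ ∑ _s ∈ univ.erase m, (t - 1) :=
          sum_le_sum fun s hs => Nat.le_sub_one_of_lt (h s (ne_of_mem_erase hs))
      _ = (Fintype.card γ - 1) * (t - 1) := by
          rw [sum_const, card_erase_of_mem (mem_univ m), card_univ, smul_eq_mul]
  have := (card_le_card hcover).trans (card_union_le _ _)
  have hk : 0 < Fintype.card γ := Fintype.card_pos_iff.2 ⟨m⟩
  rw [card_univ, Fintype.card_fin] at this
  have : (Fintype.card γ - 1) * (t - 1) + (t - 1) = Fintype.card γ * (t - 1) := by
    rw [← Nat.succ_mul, Nat.succ_eq_add_one, Nat.sub_add_cancel hk]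
  omega

lemma card_sub_two_le_card_compl_columnsWith {m s : γ} (hdom : IsDominantColor c m)
    (hsurj : ∀ i : γ, ∃ u v, c u v = i) (hsm : s ≠ m) :
    Fintype.card γ - 2 ≤ #(univ \ columnsWith c s) := by
  choose r v hv using hsurj
  have hcard : #((univ.erase m).erase s) = Fintype.card γ - 2 := by
    rw [card_erase_of_mem (mem_erase.2 ⟨hsm, mem_univ s⟩), card_erase_of_mem (mem_univ m),
      card_univ]
    omega
  rw [← hcard]
  have hmem : ∀ {i}, i ∈ ((univ.erase m).erase s : Finset γ) → i ≠ s ∧ i ≠ m := by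
    intro i hi
    simpa only [mem_erase, mem_univ, and_true] using hi
  refine card_le_card_of_injOn v (fun i hi => ?_) (fun i hi j hj hij => ?_)
  · obtain ⟨his, him⟩ := hmem (mem_coe.1 hi)
    simp only [coe_sdiff, coe_univ, Set.mem_sdiff, Set.mem_univ, true_and, mem_coe, columnsWith,
      mem_filter]
    rintro ⟨-, u, hu⟩
    exact his ((hv i).symm.trans (hdom.1 _ _ _ (by rw [hv]; exact him) (hu ▸ hsm)) |>.trans hu)
  · have := hdom.1 (v i) (r i) (r j) (by rw [hv]; exact (hmem (mem_coe.1 hi)).2)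
      (by rw [hij, hv]; exact (hmem (mem_coe.1 hj)).2)
    rwa [hv, hij, hv] at this

theorem hasMonoKst_of_isDominantColor {m : γ} (hdom : IsDominantColor c m)
    (hsurj : ∀ i : γ, ∃ u v, c u v = i) (hN : Fintype.card γ * (t - 1) < N)
    (hk : t + 2 ≤ Fintype.card γ) : hasMonoKst c t t := by
  classical
  have h3t : 3 * (t - 1) < N := by
    rcases Nat.eq_zero_or_pos t with rfl | ht
    · simpa using hN
    · exact lt_of_le_of_lt (Nat.mul_le_mul_right _ (by omega)) hN
  by_cases hclean : t ≤ #(univ.filter fun v => ∀ u, c u v = m)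
  · exact hasMonoKst_of_le_card (i := m) (S := univ) (by rw [card_univ, Fintype.card_fin]; omega)
      hclean fun u _ v hv => (mem_filter.1 hv).2 u
  obtain ⟨s, hsm, hs⟩ := exists_le_card_columnsWith hN m (not_le.1 hclean)
  have hcompl := card_sub_two_le_card_compl_columnsWith hdom hsurj hsm
  have hrows := card_filter_add_card_filter_not (s := univ) (p := IsRichRow c m)
  rw [card_univ, Fintype.card_fin] at hrows
  by_cases hrich : t ≤ #(univ.filter (IsRichRow c m))
  · obtain ⟨u₀, hu₀⟩ := card_pos.1 (by omega : 0 < #(univ.filter (IsRichRow c m)))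
    exact hasMonoKst_of_forall_eq_row hN hrich
      fun u hu => hdom.2 u u₀ (mem_filter.1 hu).2 (mem_filter.1 hu₀).2
  · exact hasMonoKst_of_not_isRichRow hdom hsm hs (by omega)
      (P := univ.filter fun u => ¬ IsRichRow c m u) (fun u hu => (mem_filter.1 hu).2) (by omega)

end Counting

theorem hasRainbowP5_or_hasMonoKst [Fintype γ] [DecidableEq γ] {t : ℕ} (ht : 3 ≤ t)
    (hk : t + 2 ≤ Fintype.card γ) (hN : Fintype.card γ * (t - 1) < N)
    (c : Fin N → Fin N → γ) (hsurj : ∀ i, ∃ u v, c u v = i) :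
    hasRainbowP5 c ∨ hasMonoKst c t t := by
  refine or_iff_not_imp_left.2 fun hnr => ?_
  have hcol : colors c = univ := eq_univ_of_forall fun i => mem_colors.2 (hsurj i)
  have hN5 : 5 ≤ N := by
    have := Nat.mul_le_mul (by omega : 5 ≤ Fintype.card γ) (by omega : 1 ≤ t - 1)
    omega
  rcases exists_isDominantColor (fun h => hnr (Or.inl h)) (fun h => hnr (Or.inr h)) hN5
    (by rw [hcol, card_univ]; omega) with ⟨m, hm⟩ | ⟨m, hm⟩
  · exact hasMonoKst_of_isDominantColor hm hsurj hN hk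
  · refine hasMonoKst_of_swap (hasMonoKst_of_isDominantColor hm (fun i => ?_) hN hk)
    obtain ⟨u, v, h⟩ := hsurj i
    exact ⟨v, u, h⟩

lemma not_hasRainbowP5_of_columns_monochromatic (h : ∀ u u' v, c u v = c u' v) : ¬ hasRainbowP5 c := by
  rintro (⟨_, _, _, _, _, -, -, -, -, h₁, -⟩ | ⟨_, _, _, _, _, -, -, -, -, -, -, -, h₄, -⟩)
  · exact h₁ (h _ _ _)
  · exact h₄ (h _ _ _)

def blockColoring (a b : ℕ) : Fin (a * b) → Fin (a * b) → Fin a :=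
  fun _ v => (finProdFinEquiv.symm v).1

lemma blockColoring_surjective {a b : ℕ} (hb : 0 < b) (i : Fin a) :
    ∃ u v, blockColoring a b u v = i :=
  ⟨finProdFinEquiv (i, ⟨0, hb⟩), finProdFinEquiv (i, ⟨0, hb⟩), by simp [blockColoring]⟩

lemma not_hasMonoKst_blockColoring {a b t : ℕ} (hbt : b < t) :
    ¬ hasMonoKst (blockColoring a b) t t := by
  rintro ⟨i, S, T, hST, h⟩
  have hT : #T = t := by rcases hST with ⟨-, h⟩ | ⟨-, h⟩ <;> exact h
  obtain ⟨u, hu⟩ : S.Nonempty := card_pos.1 (by rcases hST with ⟨h, -⟩ | ⟨h, -⟩ <;> omega)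
  have : #T ≤ #(univ : Finset (Fin b)) :=
    card_le_card_of_injOn (fun v => (finProdFinEquiv.symm v).2) (fun _ _ => mem_coe.2 (mem_univ _))
      fun v hv v' hv' hvv' => finProdFinEquiv.symm.injective
        (Prod.ext ((h u hu v hv).trans (h u hu v' hv').symm) hvv')
  rw [card_univ, Fintype.card_fin] at this
  omega

end RainbowP5

open RainbowP5

/-- for `t ≥ 3` and `k ≥ t + 2`, `bgr_k(P₅ : K_{t,t}) = kt − k + 1`. -/
theorem stmt12 (k t : ℕ) (ht : 3 ≤ t) (hk : t + 2 ≤ k) :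
    bgrP5Ktt k t (k * t - k + 1) ∧
    (∀ n : ℕ, bgrP5Ktt k t n → k * t - k + 1 ≤ n) := by
  rw [← Nat.mul_sub_one]
  refine ⟨⟨?_, fun N hN c hc => ?_⟩, fun n hn => ?_⟩
  · calc k ≤ k * (t - 1) + 1 := by have := Nat.le_mul_of_pos_right k (by omega : 0 < t - 1); omega
      _ ≤ (k * (t - 1) + 1) ^ 2 := Nat.le_self_pow two_ne_zero _
  · exact hasRainbowP5_or_hasMonoKst ht (by simpa using hk) (by simpa using hN) c hc
  · by_contra! hlt
    rcases hn.2 (k * (t - 1)) (by omega) (blockColoring k (t - 1))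
      (blockColoring_surjective (by omega)) with h | h
    · exact not_hasRainbowP5_of_columns_monochromatic (fun _ _ _ => rfl) h
    · exact not_hasMonoKst_blockColoring (by omega) h
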